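/- arXiv:1612.05660 — 2 statements merged into one kernel-verified Lean document; each statement's English description precedes it below -/
import Mathlib

section
/- Let J_C be a neural ideal. If the canonical form CF(J_C) is a Gröbner basis of J_C (for some monomial ordering), then it is a reduced Gröbner basis: no term of any f ∈ CF(J_C) is divisible by the leading term of any other g ∈ CF(J_C). -/
open MvPolynomial

universe u

/-- The pseudo-monomial `x_σ * ∏_{j ∈ τ} (1 + x_j)` in `F₂[x₁,…,xₙ]`. -/
noncomputable def psm {n : ℕ} (σ τ : Finset (Fin n)) : MvPolynomial (Fin n) (ZMod 2) :=
  (∏ i ∈ σ, X i) * ∏ j ∈ τ, (1 + X j)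

/-- A polynomial is a pseudo-monomial if it equals `psm σ τ` for disjoint `σ τ`. -/
def IsPseudoMonomial {n : ℕ} (f : MvPolynomial (Fin n) (ZMod 2)) : Prop :=
  ∃ σ τ : Finset (Fin n), Disjoint σ τ ∧ f = psm σ τ

/-- The characteristic polynomial `ρ_v = ∏ i (1 - v_i - x_i)` of a point `v ∈ {0,1}ⁿ`. -/
noncomputable def rho {n : ℕ} (v : Fin n → ZMod 2) : MvPolynomial (Fin n) (ZMod 2) :=
  ∏ i, (1 - C (v i) - X i)

/-- The neural ideal `J_C` of a code `Co ⊆ {0,1}ⁿ`. -/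
noncomputable def neuralIdeal {n : ℕ} (Co : Set (Fin n → ZMod 2)) :
    Ideal (MvPolynomial (Fin n) (ZMod 2)) :=
  Ideal.span {p | ∃ v, v ∉ Co ∧ p = rho v}

/-- The canonical form: the set of minimal pseudo-monomials of an ideal. -/
def canonicalForm {n : ℕ} (J : Ideal (MvPolynomial (Fin n) (ZMod 2))) :
    Set (MvPolynomial (Fin n) (ZMod 2)) :=
  {f | IsPseudoMonomial f ∧ f ∈ J ∧
    ∀ g : MvPolynomial (Fin n) (ZMod 2), IsPseudoMonomial g → g ∈ J → g ∣ f → g = f}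

/-- The multidegree (exponent of the leading term) of `f` w.r.t. a monomial order `m`. -/
noncomputable def leadDeg {n : ℕ} (m : MonomialOrder.{0,u} (Fin n))
    (f : MvPolynomial (Fin n) (ZMod 2)) : Fin n →₀ ℕ :=
  m.toSyn.symm (f.support.sup (fun d => m.toSyn d))

/-- The exponent vector of the square-free monomial `x_ω`. -/
noncomputable def expOf {n : ℕ} (ω : Finset (Fin n)) : Fin n →₀ ℕ :=
  ∑ i ∈ ω, Finsupp.single i 1

/-- `G` is a Gröbner basis of `J` w.r.t. the monomial order `m`: a finite subset of `J`
whose leading terms generate the leading term ideal, i.e. the leading term of every nonzero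
element of `J` is divisible by the leading term of some element of `G`. -/
def IsGB {n : ℕ} (m : MonomialOrder.{0,u} (Fin n)) (J : Ideal (MvPolynomial (Fin n) (ZMod 2)))
    (G : Set (MvPolynomial (Fin n) (ZMod 2))) : Prop :=
  G.Finite ∧ G ⊆ (J : Set (MvPolynomial (Fin n) (ZMod 2))) ∧
    ∀ f ∈ J, f ≠ 0 → ∃ g ∈ G, g ≠ 0 ∧ leadDeg m g ≤ leadDeg m f

/-- A reduced Gröbner basis: every element has leading coefficient 1, and no term of any
element is divisible by the leading term of another element. -/
def IsReducedGB {n : ℕ} (m : MonomialOrder.{0,u} (Fin n))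
    (J : Ideal (MvPolynomial (Fin n) (ZMod 2)))
    (G : Set (MvPolynomial (Fin n) (ZMod 2))) : Prop :=
  IsGB m J G ∧ (∀ g ∈ G, coeff (leadDeg m g) g = 1) ∧
    ∀ f ∈ G, ∀ g ∈ G, g ≠ f → ∀ d ∈ f.support, ¬ leadDeg m g ≤ d

/-- The universal Gröbner basis: the union of all reduced Gröbner bases. -/
def universalGB {n : ℕ} (J : Ideal (MvPolynomial (Fin n) (ZMod 2))) :
    Set (MvPolynomial (Fin n) (ZMod 2)) :=
  {f | ∃ (m : MonomialOrder.{0,u} (Fin n)) (G : Set (MvPolynomial (Fin n) (ZMod 2))),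
    IsReducedGB m J G ∧ f ∈ G}

/-- The receptive field code of a family of sets `U i` in a stimulus space `S`. -/
def rfCode {n : ℕ} {S : Type} (U : Fin n → Set S) : Set (Fin n → ZMod 2) :=
  {c | ((⋂ i ∈ {i : Fin n | c i = 1}, U i) \ ⋃ j ∈ {j : Fin n | c j = 0}, U j).Nonempty}

/-!
Write `f = x_σ ∏_{j ∈ τ} (1 + x_j)`. Every term of a pseudo-monomial divides `x_{σ ∪ τ}`, so
this is its leading term for every monomial order. If the leading term of some other
`g ∈ CF(J)` divides a term of `f`, it divides `x_{σ ∪ τ}`; cancelling the leading term of `f`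
by a multiple of `g` leaves an element of `J` supported on the square-free monomials `x_W`,
`W ⊊ σ ∪ τ`, and the division algorithm by the Gröbner basis `CF(J)` never leaves these
monomials. Hence `f` is a combination of multiples of elements `g' ≠ f` of `CF(J)` whose leading
terms divide `x_{σ ∪ τ}`. At the indicator vector `v` of `σ` we have `f(v) = 1`, while each such
`g'` vanishes at `v`: otherwise `g'` would divide `f`, against the minimality of `f`.
-/

section PseudoMonomial

variable {n : ℕ}

lemma expOf_apply (ω : Finset (Fin n)) (i : Fin n) : expOf ω i = if i ∈ ω then 1 else 0 := by
  classical
  simp [expOf, Finsupp.finsetSum_apply, Finsupp.single_apply]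

lemma expOf_le_expOf_iff {A B : Finset (Fin n)} : expOf A ≤ expOf B ↔ A ⊆ B := by
  refine ⟨fun h i hi => ?_, fun h => Finsupp.le_def.mpr fun i => ?_⟩
  · by_contra hiB
    simpa [expOf_apply, hi, hiB] using Finsupp.le_def.mp h i
  · by_cases hi : i ∈ A
    · simp [expOf_apply, hi, h hi]
    · simp [expOf_apply, hi]

lemma expOf_injective : Function.Injective (expOf (n := n)) := fun _ _ h =>
  (expOf_le_expOf_iff.mp h.le).antisymm (expOf_le_expOf_iff.mp h.ge)

lemma expOf_union {A B : Finset (Fin n)} (h : Disjoint A B) :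
    expOf (A ∪ B) = expOf A + expOf B :=
  Finset.sum_union h

lemma prod_X_eq_monomial_expOf (s : Finset (Fin n)) :
    ∏ i ∈ s, (X i : MvPolynomial (Fin n) (ZMod 2)) = monomial (expOf s) 1 := by
  classical
  induction s using Finset.cons_induction with
  | empty => simp [expOf]
  | cons a s ha ih =>
    rw [Finset.prod_cons, ih, X, monomial_mul, one_mul, expOf, expOf, Finset.sum_cons]

lemma psm_eq_sum {σ τ : Finset (Fin n)} (h : Disjoint σ τ) :
    psm σ τ = ∑ T ∈ τ.powerset, monomial (expOf (σ ∪ T)) 1 := by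
  rw [psm, Finset.prod_one_add, Finset.mul_sum]
  refine Finset.sum_congr rfl fun T hT => ?_
  rw [prod_X_eq_monomial_expOf, prod_X_eq_monomial_expOf, monomial_mul, one_mul,
    expOf_union (h.mono_right (Finset.mem_powerset.mp hT))]

lemma le_expOf_of_mem_support_psm {σ τ : Finset (Fin n)} (h : Disjoint σ τ) {d : Fin n →₀ ℕ}
    (hd : d ∈ (psm σ τ).support) : d ≤ expOf (σ ∪ τ) := by
  classical
  rw [psm_eq_sum h] at hd
  obtain ⟨T, hT, hdT⟩ := Finset.mem_biUnion.mp (support_sum hd)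
  rw [support_monomial, if_neg one_ne_zero, Finset.mem_singleton] at hdT
  exact hdT ▸ expOf_le_expOf_iff.mpr (Finset.union_subset_union le_rfl (Finset.mem_powerset.mp hT))

lemma coeff_psm_expOf_union {σ τ : Finset (Fin n)} (h : Disjoint σ τ) :
    coeff (expOf (σ ∪ τ)) (psm σ τ) = 1 := by
  classical
  rw [psm_eq_sum h, coeff_sum, Finset.sum_eq_single_of_mem τ (Finset.mem_powerset_self τ)]
  · exact coeff_monomial _ _ _ |>.trans (if_pos rfl)
  · intro T hT hTτ
    rw [coeff_monomial, if_neg]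
    intro he
    refine hTτ ((Finset.mem_powerset.mp hT).antisymm fun i hi => ?_)
    have hi' := expOf_injective he ▸ Finset.mem_union_right σ hi
    exact (Finset.mem_union.mp hi').resolve_left (Finset.disjoint_right.mp h hi)

lemma psm_ne_zero {σ τ : Finset (Fin n)} (h : Disjoint σ τ) : psm σ τ ≠ 0 := fun h0 => by
  simpa [h0] using coeff_psm_expOf_union h

lemma psm_dvd_psm {σ τ σ' τ' : Finset (Fin n)} (hσ : σ' ⊆ σ) (hτ : τ' ⊆ τ) :
    psm σ' τ' ∣ psm σ τ :=
  mul_dvd_mul (Finset.prod_dvd_prod_of_subset _ _ _ hσ) (Finset.prod_dvd_prod_of_subset _ _ _ hτ)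

lemma eval_indicator_psm_self {σ τ : Finset (Fin n)} (h : Disjoint σ τ) :
    eval (fun i => if i ∈ σ then 1 else 0) (psm σ τ) = 1 := by
  rw [psm, map_mul, eval_prod, eval_prod, Finset.prod_eq_one fun i hi => by simp [hi],
    Finset.prod_eq_one fun j hj => by simp [Finset.disjoint_right.mp h hj], one_mul]

/-- At the indicator vector of `σ`, `x_{σ'} ∏_{j ∈ τ'} (1 + x_j)` is nonzero only if `σ' ⊆ σ`
and `τ'` misses `σ`. -/
lemma psm_dvd_psm_of_eval_indicator_ne_zero {σ τ σ' τ' : Finset (Fin n)}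
    (hsub : σ' ∪ τ' ⊆ σ ∪ τ) (h : eval (fun i => if i ∈ σ then 1 else 0) (psm σ' τ') ≠ 0) :
    psm σ' τ' ∣ psm σ τ := by
  rw [psm, map_mul, eval_prod, eval_prod] at h
  simp only [map_add, map_one, eval_X] at h
  obtain ⟨hσ', hτ'⟩ := mul_ne_zero_iff.mp h
  have hσ : σ' ⊆ σ := fun i hi => by
    by_contra hiσ
    exact Finset.prod_ne_zero_iff.mp hσ' i hi (if_neg hiσ)
  have hτ : τ' ⊆ τ := fun j hj => by
    have hjσ : j ∉ σ := fun hjσ =>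
      Finset.prod_ne_zero_iff.mp hτ' j hj (by rw [if_pos hjσ]; decide)
    exact (Finset.mem_union.mp (hsub (Finset.mem_union_right _ hj))).resolve_left hjσ
  exact psm_dvd_psm hσ hτ

end PseudoMonomial

section Degree

variable {ι R : Type*} [CommSemiring R]

lemma MonomialOrder.degree_eq_of_forall_le (m : MonomialOrder ι) {p : MvPolynomial ι R}
    {e : ι →₀ ℕ} (he : e ∈ p.support) (h : ∀ d ∈ p.support, d ≤ e) : m.degree p = e :=
  m.toSyn.injective <| le_antisymm
    (m.toSyn_monotone (h _ (m.degree_mem_support (by rintro rfl; simp at he)))) (m.le_degree he)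

lemma MvPolynomial.le_add_of_mem_support_monomial_mul {g : MvPolynomial ι R} {a s d : ι →₀ ℕ}
    {c : R} (hg : ∀ d ∈ g.support, d ≤ a) (hd : d ∈ (monomial s c * g).support) : d ≤ s + a := by
  rw [mem_support_iff, coeff_monomial_mul'] at hd
  split_ifs at hd with hsd
  · calc d = s + (d - s) := (add_tsub_cancel_of_le hsd).symm
      _ ≤ s + a := add_le_add_right (hg _ (mem_support_iff.mpr (right_ne_zero_of_mul hd))) s
  · exact absurd rfl hd

end Degree

section GroebnerBasis

variable {n : ℕ} (m : MonomialOrder.{0,u} (Fin n))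

lemma leadDeg_psm {σ τ : Finset (Fin n)} (h : Disjoint σ τ) :
    leadDeg m (psm σ τ) = expOf (σ ∪ τ) :=
  m.degree_eq_of_forall_le (by simp [coeff_psm_expOf_union h])
    fun _ => le_expOf_of_mem_support_psm h

lemma IsPseudoMonomial.ne_zero {f : MvPolynomial (Fin n) (ZMod 2)} (hf : IsPseudoMonomial f) :
    f ≠ 0 := by
  obtain ⟨σ, τ, h, rfl⟩ := hf
  exact psm_ne_zero h

lemma IsPseudoMonomial.le_leadDeg {f : MvPolynomial (Fin n) (ZMod 2)} (hf : IsPseudoMonomial f)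
    {d : Fin n →₀ ℕ} (hd : d ∈ f.support) : d ≤ leadDeg m f := by
  obtain ⟨σ, τ, h, rfl⟩ := hf
  exact leadDeg_psm m h ▸ le_expOf_of_mem_support_psm h hd

/-- Over `𝔽₂`, adding the multiple of `g` with leading term `x^e` kills the term `x^e` of `r`. -/
lemma mem_support_add_monomial_mul {r g : MvPolynomial (Fin n) (ZMod 2)} {e d : Fin n →₀ ℕ}
    (he : e ∈ r.support) (hg0 : g ≠ 0) (hg : ∀ d ∈ g.support, d ≤ leadDeg m g)
    (hge : leadDeg m g ≤ e) (hd : d ∈ (r + monomial (e - leadDeg m g) 1 * g).support) :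
    d ≠ e ∧ (d ∈ r.support ∨ d ≤ e) := by
  have eq_one : ∀ a : ZMod 2, a ≠ 0 → a = 1 := by decide
  refine ⟨?_, ?_⟩
  · rintro rfl
    have hq := coeff_monomial_mul (leadDeg m g) (d - leadDeg m g) 1 g
    rw [tsub_add_cancel_of_le hge, one_mul,
      eq_one (coeff (leadDeg m g) g) (m.coeff_degree_ne_zero_iff.mpr hg0)] at hq
    have hr := eq_one _ (mem_support_iff.mp he)
    exact mem_support_iff.mp hd (by rw [coeff_add, hq, hr]; decide)
  · refine (Finset.mem_union.mp (support_add hd)).imp id fun hdq => ?_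
    simpa [tsub_add_cancel_of_le hge] using le_add_of_mem_support_monomial_mul hg hdq

/-- The division algorithm by `G` never leaves a divisibility-closed set `S` of exponents, because
every term of an element of `G` divides its leading term. -/
theorem mem_span_of_isGB {J : Ideal (MvPolynomial (Fin n) (ZMod 2))}
    {G : Set (MvPolynomial (Fin n) (ZMod 2))} (hG : IsGB m J G)
    (hdom : ∀ g ∈ G, ∀ d ∈ g.support, d ≤ leadDeg m g) {S : Set (Fin n →₀ ℕ)} (hS : IsLowerSet S)
    {r : MvPolynomial (Fin n) (ZMod 2)} (hr : r ∈ J) (hrS : ∀ d ∈ r.support, d ∈ S) :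
    r ∈ Ideal.span {g ∈ G | leadDeg m g ∈ S} := by
  induction hdeg : m.toSyn (leadDeg m r) using WellFoundedLT.induction generalizing r with
  | ind a ih =>
    by_cases hr0 : r = 0
    · exact hr0 ▸ Ideal.zero_mem _
    obtain ⟨g, hgG, hg0, hgr⟩ := hG.2.2 r hr hr0
    have hlead : leadDeg m r ∈ r.support := m.degree_mem_support hr0
    set q := monomial (leadDeg m r - leadDeg m g) 1 * g
    have hq : q ∈ Ideal.span {g ∈ G | leadDeg m g ∈ S} :=
      Ideal.mul_mem_left _ _ (Ideal.subset_span ⟨hgG, hS hgr (hrS _ hlead)⟩)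
    have hsupp : ∀ d ∈ (r + q).support, d ≠ leadDeg m r ∧ (d ∈ r.support ∨ d ≤ leadDeg m r) :=
      fun d hd => mem_support_add_monomial_mul m hlead hg0 (hdom g hgG) hgr hd
    have hr'q : r + q ∈ Ideal.span {g ∈ G | leadDeg m g ∈ S} := by
      by_cases hr'0 : r + q = 0
      · exact hr'0 ▸ Ideal.zero_mem _
      refine ih _ ?_ (J.add_mem hr (J.mul_mem_left _ (hG.2.1 hgG)))
        (fun d hd => (hsupp d hd).2.elim (hrS d) fun hle => hS hle (hrS _ hlead)) rfl
      obtain ⟨hne, hle⟩ := hsupp _ (m.degree_mem_support hr'0)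
      refine hdeg ▸ lt_of_le_of_ne ?_ (m.toSyn.injective.ne hne)
      exact hle.elim m.le_degree fun h => m.toSyn_monotone h
    simpa using Ideal.sub_mem _ hr'q hq

end GroebnerBasis

section CanonicalForm

variable {n : ℕ} (m : MonomialOrder.{0,u} (Fin n)) {J : Ideal (MvPolynomial (Fin n) (ZMod 2))}

lemma eval_indicator_eq_zero_of_mem_canonicalForm {σ τ : Finset (Fin n)}
    (hf : psm σ τ ∈ canonicalForm J) {g : MvPolynomial (Fin n) (ZMod 2)}
    (hg : g ∈ canonicalForm J) (hgf : g ≠ psm σ τ) (hgE : leadDeg m g ≤ expOf (σ ∪ τ)) :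
    eval (fun i => if i ∈ σ then 1 else 0) g = 0 := by
  obtain ⟨⟨σ', τ', h', rfl⟩, hgJ, -⟩ := hg
  rw [leadDeg_psm m h', expOf_le_expOf_iff] at hgE
  by_contra hne
  exact hgf (hf.2.2 _ ⟨σ', τ', h', rfl⟩ hgJ (psm_dvd_psm_of_eval_indicator_ne_zero hgE hne))

theorem isReducedGB_canonicalForm (h : IsGB m J (canonicalForm J)) :
    IsReducedGB m J (canonicalForm J) := by
  refine ⟨h, ?_, ?_⟩
  · rintro g ⟨⟨σ, τ, hστ, rfl⟩, -, -⟩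
    rw [leadDeg_psm m hστ, coeff_psm_expOf_union hστ]
  rintro f hf g hg hgf d hd hgd
  obtain ⟨σ, τ, hστ, rfl⟩ := hf.1
  set E := expOf (σ ∪ τ)
  set v : Fin n → ZMod 2 := fun i => if i ∈ σ then 1 else 0
  have hdom : ∀ g ∈ canonicalForm J, ∀ d ∈ g.support, d ≤ leadDeg m g :=
    fun g hg _ => hg.1.le_leadDeg m
  have hgE : leadDeg m g ≤ E := hgd.trans (le_expOf_of_mem_support_psm hστ hd)
  set q := monomial (E - leadDeg m g) 1 * g
  have hvq : eval v q = 0 := by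
    rw [map_mul, eval_indicator_eq_zero_of_mem_canonicalForm m hf hg hgf hgE, mul_zero]
  have hlow : ∀ d ∈ (psm σ τ + q).support, d ∈ Set.Iio E := fun d hd' => by
    obtain ⟨hne, hle⟩ := mem_support_add_monomial_mul m
      (by simp [E, coeff_psm_expOf_union hστ]) hg.1.ne_zero (hdom g hg) hgE hd'
    exact lt_of_le_of_ne (hle.elim (le_expOf_of_mem_support_psm hστ) id) hne
  have hspan := mem_span_of_isGB m h hdom (isLowerSet_Iio E)
    (J.add_mem hf.2.1 (J.mul_mem_left _ hg.2.1)) hlow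
  have hvr : eval v (psm σ τ + q) = 0 := by
    refine (Ideal.span_le (I := RingHom.ker (eval v)).mpr ?_ hspan : _)
    rintro g' ⟨hg', hg'E : leadDeg m g' < E⟩
    exact eval_indicator_eq_zero_of_mem_canonicalForm m hf hg'
      (fun he => hg'E.ne (by rw [he, leadDeg_psm m hστ])) hg'E.le
  rw [map_add, hvq, add_zero, eval_indicator_psm_self hστ] at hvr
  exact one_ne_zero hvr

end CanonicalForm

/-- if the canonical form of a neural ideal is a Gröbner basis, then it is a
reduced Gröbner basis. -/
theorem stmt10 {n : ℕ} (Co : Set (Fin n → ZMod 2)) (m : MonomialOrder.{0,u} (Fin n))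
    (h : IsGB m (neuralIdeal Co) (canonicalForm (neuralIdeal Co))) :
    IsReducedGB m (neuralIdeal Co) (canonicalForm (neuralIdeal Co)) :=
  isReducedGB_canonicalForm m h
end

section
/- Let 𝒰 = {U₁,…,Uₙ} be sets in a stimulus space X with receptive field code C = C(𝒰), and suppose ∅ ≠ U_i = U_j ⊊ X for some i ≠ j. Then both f = x_i(x_j+1) and g = x_j(x_i+1) are minimal pseudo-monomials of J_C with the same leading term x_i x_j under every monomial ordering, and consequently the canonical form CF(J_C) is not a Gröbner basis of J_C. -/
/-!
Every codeword of `C = C(𝒰)` has `c_i = c_j`, so `x_i(x_j + 1)` and `x_j(x_i + 1)` vanish on `C`.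
A pseudo-monomial `x_σ ∏_{τ}(1 + x_k)` lies in `J_C` exactly when no codeword lies in the subcube
`{v | v = 1 on σ, v = 0 on τ}` where it does not vanish (it is the sum of the `ρ_v` over that
subcube). The codeword of a point of `U_i` and that of a point outside `U_i` thus keep the proper
pseudo-monomial divisors `1`, `x_i`, `1 + x_j` out of `J_C`, which gives minimality. Both
polynomials have leading term `x_i x_j`, and their sum `x_i + x_j ∈ J_C` has a leading term
`x_k` of degree one; a Gröbner basis inside `CF(J_C)` would need one of `1`, `x_k`, `1 + x_k`,
none of which lies in `J_C`.
-/

open MvPolynomial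

universe u

open Finset

variable {n : ℕ}

section PseudoMonomials

def subcube (σ τ : Finset (Fin n)) : Set (Fin n → ZMod 2) :=
  {v | (∀ k ∈ σ, v k = 1) ∧ ∀ k ∈ τ, v k = 0}

theorem eval_psm_ne_zero_iff (v : Fin n → ZMod 2) (σ τ : Finset (Fin n)) :
    eval v (psm σ τ) ≠ 0 ↔ v ∈ subcube σ τ := by
  have hbit : ∀ a : ZMod 2, a ≠ 0 ↔ a = 1 := by decide
  simp [psm, subcube, hbit]

theorem psm_eq_sum_rho {σ τ : Finset (Fin n)} (h : Disjoint σ τ) :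
    psm σ τ = ∑ v ∈ Fintype.piFinset
      (fun k => if k ∈ σ then {1} else if k ∈ τ then {0} else univ), rho v := by
  have h2 : (2 : MvPolynomial (Fin n) (ZMod 2)) = 0 := CharTwo.two_eq_zero
  have hfactor : ∀ k, ∑ x ∈ (if k ∈ σ then {1} else if k ∈ τ then {0} else univ),
      (1 - C x - X k : MvPolynomial (Fin n) (ZMod 2)) =
        if k ∈ σ then X k else if k ∈ τ then 1 + X k else 1 := by
    intro k
    split_ifs
    · simp only [sum_singleton, map_one]; linear_combination (-X k) * h2
    · simp only [sum_singleton, map_zero]; linear_combination (-X k) * h2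
    · rw [show (univ : Finset (ZMod 2)) = {0, 1} by decide, sum_pair zero_ne_one]
      simp only [map_zero, map_one]; linear_combination (-X k) * h2
  simp only [rho]
  rw [← prod_univ_sum (f := fun k x => (1 - C x - X k : MvPolynomial (Fin n) (ZMod 2))),
    Finset.prod_congr rfl fun k _ => hfactor k, prod_ite, prod_ite_mem, psm]
  congr 2
  · ext; simp
  · ext k
    simpa using fun hk => disjoint_right.mp h hk

theorem X_mul_X_add_one_eq_psm (a b : Fin n) :
    (X a * (X b + 1) : MvPolynomial (Fin n) (ZMod 2)) = psm {a} {b} := by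
  rw [psm, prod_singleton, prod_singleton, add_comm (X b)]

theorem degree_psm (m : MonomialOrder (Fin n)) (σ τ : Finset (Fin n)) :
    m.degree (psm σ τ) = expOf σ + expOf τ := by
  have hX : ∀ k, (X k : MvPolynomial (Fin n) (ZMod 2)) ≠ 0 := fun k => X_ne_zero k
  have hdeg : ∀ k, m.degree (1 + X k : MvPolynomial (Fin n) (ZMod 2)) = Finsupp.single k 1 :=
    fun k => by rw [add_comm, ← map_one C, m.degree_X_add_C]
  have hXadd : ∀ k, (1 + X k : MvPolynomial (Fin n) (ZMod 2)) ≠ 0 := fun k =>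
    m.ne_zero_of_degree_ne_zero (by simp [hdeg])
  rw [psm, m.degree_mul (prod_ne_zero_iff.mpr fun k _ => hX k)
    (prod_ne_zero_iff.mpr fun k _ => hXadd k), m.degree_prod fun k _ => hX k,
    m.degree_prod fun k _ => hXadd k]
  simp only [m.degree_X, hdeg, expOf]

theorem subcube_subset_of_psm_dvd {σ τ σ' τ' : Finset (Fin n)} (hdvd : psm σ τ ∣ psm σ' τ') :
    subcube σ' τ' ⊆ subcube σ τ := by
  intro v hv
  obtain ⟨q, hq⟩ := hdvd
  rw [← eval_psm_ne_zero_iff] at hv ⊢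
  rw [hq, map_mul] at hv
  exact left_ne_zero_of_mul hv

theorem subset_of_psm_dvd {σ τ σ' τ' : Finset (Fin n)} (h : Disjoint σ' τ')
    (hdvd : psm σ τ ∣ psm σ' τ') : σ ⊆ σ' ∧ τ ⊆ τ' := by
  have hsub := subcube_subset_of_psm_dvd hdvd
  constructor
  · intro k hk
    have hv : (fun l => if l ∈ σ' then 1 else 0) ∈ subcube σ' τ' :=
      ⟨fun l hl => if_pos hl, fun l hl => if_neg (disjoint_right.mp h hl)⟩
    by_contra hkσ'
    simpa [hkσ'] using (hsub hv).1 k hk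
  · intro k hk
    have hv : (fun l => if l ∈ τ' then 0 else 1) ∈ subcube σ' τ' :=
      ⟨fun l hl => if_neg (disjoint_left.mp h hl), fun l hl => if_pos hl⟩
    by_contra hkτ'
    simpa [hkτ'] using (hsub hv).2 k hk

end PseudoMonomials

section NeuralIdeal

variable {Co : Set (Fin n → ZMod 2)}

theorem eval_eq_zero_of_mem_neuralIdeal {c : Fin n → ZMod 2} (hc : c ∈ Co)
    {p : MvPolynomial (Fin n) (ZMod 2)} (hp : p ∈ neuralIdeal Co) : eval c p = 0 := by
  suffices neuralIdeal Co ≤ RingHom.ker (eval c) from this hp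
  rw [neuralIdeal, Ideal.span_le]
  rintro _ ⟨v, hv, rfl⟩
  obtain ⟨k, hk⟩ := Function.ne_iff.mp (ne_of_mem_of_not_mem hc hv).symm
  have hfactor : ∀ a b : ZMod 2, a ≠ b → 1 - a - b = 0 := by decide
  simpa [rho, Finset.prod_eq_zero_iff] using ⟨k, hfactor _ _ hk⟩

theorem notMem_subcube_of_psm_mem {σ τ : Finset (Fin n)} (hJ : psm σ τ ∈ neuralIdeal Co)
    {c : Fin n → ZMod 2} (hc : c ∈ Co) : c ∉ subcube σ τ := fun hcube =>
  (eval_psm_ne_zero_iff c σ τ).mpr hcube (eval_eq_zero_of_mem_neuralIdeal hc hJ)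

theorem psm_mem_neuralIdeal_iff {σ τ : Finset (Fin n)} (h : Disjoint σ τ) :
    psm σ τ ∈ neuralIdeal Co ↔ Disjoint (subcube σ τ) Co := by
  refine ⟨fun hJ => Set.disjoint_right.mpr fun c hc => notMem_subcube_of_psm_mem hJ hc,
    fun hdisj => ?_⟩
  rw [psm_eq_sum_rho h]
  refine Ideal.sum_mem _ fun v hv => Ideal.subset_span ⟨v, ?_, rfl⟩
  refine Set.disjoint_left.mp hdisj ⟨fun k hk => ?_, fun k hk => ?_⟩
  · simpa [hk] using Fintype.mem_piFinset.mp hv k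
  · simpa [hk, disjoint_right.mp h hk] using Fintype.mem_piFinset.mp hv k

variable {a b : Fin n} {c₁ c₀ : Fin n → ZMod 2}

theorem eq_singletons_of_psm_mem_neuralIdeal (hc₁ : c₁ ∈ Co) (h₁ : c₁ a = 1)
    (hc₀ : c₀ ∈ Co) (h₀ : c₀ b = 0) {σ τ : Finset (Fin n)} (hσ : σ ⊆ {a}) (hτ : τ ⊆ {b})
    (hJ : psm σ τ ∈ neuralIdeal Co) : σ = {a} ∧ τ = {b} := by
  rcases subset_singleton_iff.mp hσ with rfl | hσa
  · refine absurd ⟨by simp, fun k hk => ?_⟩ (notMem_subcube_of_psm_mem hJ hc₀)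
    rwa [mem_singleton.mp (hτ hk)]
  rcases subset_singleton_iff.mp hτ with rfl | hτb
  · refine absurd ⟨fun k hk => ?_, by simp⟩ (notMem_subcube_of_psm_mem hJ hc₁)
    rwa [mem_singleton.mp (hσ hk)]
  exact ⟨hσa, hτb⟩

theorem X_mul_X_add_one_mem_canonicalForm (hab : a ≠ b)
    (hsub : ∀ c ∈ Co, c a = 1 → c b = 1) (hc₁ : c₁ ∈ Co) (h₁ : c₁ a = 1)
    (hc₀ : c₀ ∈ Co) (h₀ : c₀ b = 0) :
    (X a * (X b + 1) : MvPolynomial (Fin n) (ZMod 2)) ∈ canonicalForm (neuralIdeal Co) := by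
  have hdisj : Disjoint ({a} : Finset (Fin n)) {b} := disjoint_singleton.mpr hab
  rw [X_mul_X_add_one_eq_psm]
  refine ⟨⟨{a}, {b}, hdisj, rfl⟩, (psm_mem_neuralIdeal_iff hdisj).mpr ?_, ?_⟩
  · refine Set.disjoint_left.mpr fun c ⟨hca, hcb⟩ hc => ?_
    simp only [mem_singleton, forall_eq] at hca hcb
    simpa [hcb] using hsub c hc hca
  · rintro _ ⟨σ, τ, -, rfl⟩ hJ hdvd
    obtain ⟨hσ, hτ⟩ := subset_of_psm_dvd hdisj hdvd
    obtain ⟨rfl, rfl⟩ := eq_singletons_of_psm_mem_neuralIdeal hc₁ h₁ hc₀ h₀ hσ hτ hJ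
    rfl

end NeuralIdeal

section LeadingTerms

variable (m : MonomialOrder.{0, u} (Fin n))

theorem leadDeg_eq_degree (f : MvPolynomial (Fin n) (ZMod 2)) : leadDeg m f = m.degree f := rfl

theorem expOf_singleton (k : Fin n) : expOf {k} = Finsupp.single k 1 := sum_singleton _ _

theorem subset_of_expOf_le {ω ω' : Finset (Fin n)} (h : expOf ω ≤ expOf ω') : ω ⊆ ω' := by
  intro k hk
  by_contra hk'
  simpa [expOf, Finsupp.single_apply, hk, hk'] using h k

theorem degree_X_mul_X_add_one {a b : Fin n} (hab : a ≠ b) :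
    m.degree (X a * (X b + 1) : MvPolynomial (Fin n) (ZMod 2)) = expOf {a, b} := by
  rw [X_mul_X_add_one_eq_psm, degree_psm, expOf_singleton, expOf_singleton, expOf,
    sum_pair hab]

theorem X_add_X_ne_zero {a b : Fin n} (hab : a ≠ b) :
    (X a + X b : MvPolynomial (Fin n) (ZMod 2)) ≠ 0 := by
  rw [Ne, CharTwo.add_eq_zero, (X_injective (R := ZMod 2)).eq_iff]
  exact hab

theorem degree_X_add_X {a b : Fin n} (hab : a ≠ b) :
    m.degree (X a + X b : MvPolynomial (Fin n) (ZMod 2)) = Finsupp.single a 1 ∨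
      m.degree (X a + X b : MvPolynomial (Fin n) (ZMod 2)) = Finsupp.single b 1 := by
  have hmem := support_add (m.degree_mem_support (X_add_X_ne_zero hab))
  simpa [support_X] using hmem

theorem not_isGB_canonicalForm {Co : Set (Fin n → ZMod 2)} {p : MvPolynomial (Fin n) (ZMod 2)}
    (hp : p ∈ neuralIdeal Co) (hp0 : p ≠ 0) {k : Fin n}
    (hdeg : m.degree p = Finsupp.single k 1) {c₁ c₀ : Fin n → ZMod 2} (hc₁ : c₁ ∈ Co)
    (h₁ : c₁ k = 1) (hc₀ : c₀ ∈ Co) (h₀ : c₀ k = 0) :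
    ¬ IsGB m (neuralIdeal Co) (canonicalForm (neuralIdeal Co)) := by
  rintro ⟨-, -, hGB⟩
  obtain ⟨_, ⟨⟨σ, τ, hστ, rfl⟩, hJ, -⟩, -, hle⟩ := hGB p hp hp0
  rw [leadDeg_eq_degree, leadDeg_eq_degree, degree_psm, hdeg, ← expOf_singleton] at hle
  obtain ⟨rfl, rfl⟩ := eq_singletons_of_psm_mem_neuralIdeal hc₁ h₁ hc₀ h₀
    (subset_of_expOf_le (le_self_add.trans hle)) (subset_of_expOf_le (le_add_self.trans hle)) hJ
  exact absurd hστ (by simp)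

end LeadingTerms

section ReceptiveFieldCode

variable {S : Type} (U : Fin n → Set S)

open Classical in
noncomputable def codeword (p : S) : Fin n → ZMod 2 := fun k => if p ∈ U k then 1 else 0

theorem rfCode_eq_range_codeword : rfCode U = Set.range (codeword U) := by
  ext c
  constructor
  · rintro ⟨p, hp₁, hp₀⟩
    refine ⟨p, funext fun k => ?_⟩
    have hbit : c k = 0 ∨ c k = 1 := by generalize c k = a; decide +revert
    by_cases hpk : p ∈ U k
    · have hck : c k ≠ 0 := fun hck => hp₀ (Set.mem_iUnion₂.mpr ⟨k, hck, hpk⟩)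
      rw [codeword, if_pos hpk, hbit.resolve_left hck]
    · have hck : c k ≠ 1 := fun hck => hpk (Set.mem_iInter₂.mp hp₁ k hck)
      rw [codeword, if_neg hpk, hbit.resolve_right hck]
  · rintro ⟨p, rfl⟩
    exact ⟨p, by simp [codeword]⟩

end ReceptiveFieldCode

/-- if `∅ ≠ U_i = U_j ⊊ X` with `i ≠ j`, then `x_i(x_j+1)` and `x_j(x_i+1)`
are both minimal pseudo-monomials of `J_C` with the same leading term `x_i x_j` under every
monomial ordering, and the canonical form is not a Gröbner basis. -/
theorem stmt14 {n : ℕ} {S : Type} (U : Fin n → Set S) (i j : Fin n) (hij : i ≠ j)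
    (hne : (U i).Nonempty) (heq : U i = U j) (hprop : U i ≠ Set.univ) :
    (X i * (X j + 1) : MvPolynomial (Fin n) (ZMod 2)) ∈
        canonicalForm (neuralIdeal (rfCode U)) ∧
    (X j * (X i + 1) : MvPolynomial (Fin n) (ZMod 2)) ∈
        canonicalForm (neuralIdeal (rfCode U)) ∧
    (∀ m : MonomialOrder.{0,u} (Fin n),
      leadDeg m (X i * (X j + 1)) = expOf {i, j} ∧
      leadDeg m (X j * (X i + 1)) = expOf {i, j}) ∧
    (∀ m : MonomialOrder.{0,u} (Fin n),
      ¬ IsGB m (neuralIdeal (rfCode U)) (canonicalForm (neuralIdeal (rfCode U)))) := by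
  obtain ⟨p, hp⟩ := hne
  obtain ⟨q, hq⟩ := Set.ne_univ_iff_exists_notMem _ |>.mp hprop
  have hc₁ : codeword U p ∈ rfCode U := rfCode_eq_range_codeword U ▸ ⟨p, rfl⟩
  have hc₀ : codeword U q ∈ rfCode U := rfCode_eq_range_codeword U ▸ ⟨q, rfl⟩
  have hcode : ∀ c ∈ rfCode U, c i = c j := by
    rw [rfCode_eq_range_codeword]
    rintro _ ⟨r, rfl⟩
    unfold codeword
    rw [heq]
  have h₁i : codeword U p i = 1 := by simp [codeword, hp]
  have h₁j : codeword U p j = 1 := by simp [codeword, ← heq, hp]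
  have h₀i : codeword U q i = 0 := by simp [codeword, hq]
  have h₀j : codeword U q j = 0 := by simp [codeword, ← heq, hq]
  have hf := X_mul_X_add_one_mem_canonicalForm hij
    (fun c hc hci => (hcode c hc).symm.trans hci) hc₁ h₁i hc₀ h₀j
  have hg := X_mul_X_add_one_mem_canonicalForm hij.symm
    (fun c hc hcj => (hcode c hc).trans hcj) hc₁ h₁j hc₀ h₀i
  refine ⟨hf, hg, fun m => ⟨degree_X_mul_X_add_one m hij, ?_⟩, fun m => ?_⟩
  · rw [leadDeg_eq_degree, degree_X_mul_X_add_one m hij.symm, pair_comm]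
  have hsum : (X i + X j : MvPolynomial (Fin n) (ZMod 2)) ∈ neuralIdeal (rfCode U) := by
    convert add_mem hf.2.1 hg.2.1 using 1
    linear_combination (-(X i * X j) : MvPolynomial (Fin n) (ZMod 2)) *
      CharTwo.two_eq_zero (R := MvPolynomial (Fin n) (ZMod 2))
  rcases degree_X_add_X m hij with hdeg | hdeg
  exacts [not_isGB_canonicalForm m hsum (X_add_X_ne_zero hij) hdeg hc₁ h₁i hc₀ h₀i,
    not_isGB_canonicalForm m hsum (X_add_X_ne_zero hij) hdeg hc₁ h₁j hc₀ h₀j]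
end
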